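/- Let R be a commutative ring that is also a Q-algebra, let d ≥ 1, and let M be a d × d matrix over R. Then in the formal power series ring R⟦z⟧ one has det(1 − z·M) · exp( Σ_{n≥1} tr(M^n) z^n / n ) = 1, where 1 − z·M is regarded as a d × d matrix over R⟦z⟧, det is its determinant, tr(M^n) is the trace of the n-th matrix power of M, and exp denotes the formal exponential power series Σ_{m≥0} X^m/m! applied to a power series with zero constant term. -/

import Mathlib

/-!
Write `P = det (1 - X • M)`, `T = ∑ₙ tr (Mⁿ) Xⁿ / n` and `E = exp T`. Since `1 - X • M` has inverse
`∑ₖ Mᵏ Xᵏ`, its adjugate is `P ∑ₖ Mᵏ Xᵏ`, so Jacobi's formula `P' = tr (adj (1 - X • M) * (-M))`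
gives `P' = -P ∑ₖ tr (Mᵏ⁺¹) Xᵏ = -P T'`; by the chain rule `E' = E T'`. Hence `(P E)' = 0`, and
as `P E` has constant coefficient `1` and `R` is torsion free, `P E = 1`.
-/

open PowerSeries

/-- The formal exponential `exp F = ∑_{m≥0} F^m / m!` of a formal power series `F` with zero
constant coefficient over a `ℚ`-algebra, computed coefficientwise (for `F` with zero constant
coefficient, `coeff d (F^m) = 0` whenever `m > d`, so the sum below is exactly the `d`-th
coefficient of `∑_{m≥0} F^m / m!`). -/
noncomputable def expComp {R : Type*} [CommRing R] [Algebra ℚ R] (F : PowerSeries R) :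
    PowerSeries R :=
  PowerSeries.mk fun d => ∑ m ∈ Finset.range (d + 1),
    algebraMap ℚ R (1 / m.factorial) * PowerSeries.coeff d (F ^ m)

open Matrix

theorem Matrix.trace_adjugate_mul {R n : Type*} [CommRing R] [Fintype n] [DecidableEq n]
    (A B : Matrix n n R) :
    trace (A.adjugate * B) = ∑ j, (A.updateCol j fun i => B i j).det := by
  refine Finset.sum_congr rfl fun j _ => ?_
  have hcramer := congrFun (cramer_eq_adjugate_mulVec A fun i => B i j) j
  rw [cramer_apply] at hcramer
  simp [hcramer, mul_apply, mulVec, dotProduct]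

section Derivation

variable {R S : Type*} [CommRing R] [CommRing S] [Algebra R S] (δ : Derivation R S S)

theorem Derivation.map_finset_prod {ι : Type*} [DecidableEq ι] (s : Finset ι) (f : ι → S) :
    δ (∏ i ∈ s, f i) = ∑ i ∈ s, (∏ j ∈ s.erase i, f j) * δ (f i) := by
  induction s using Finset.induction with
  | empty => simp
  | @insert a s ha ih =>
    rw [Finset.prod_insert ha, δ.leibniz, smul_eq_mul, smul_eq_mul, ih, Finset.sum_insert ha,
      Finset.erase_insert ha, Finset.mul_sum, add_comm]
    congr 1
    refine Finset.sum_congr rfl fun i hi => ?_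
    rw [Finset.erase_insert_of_ne (by rintro rfl; exact ha hi),
      Finset.prod_insert (fun h => ha (Finset.mem_of_mem_erase h)), mul_assoc]

theorem Derivation.map_det {n : Type*} [Fintype n] [DecidableEq n] (A : Matrix n n S) :
    δ A.det = trace (A.adjugate * A.map δ) := by
  have hterm (σ : Equiv.Perm n) : δ ((Equiv.Perm.sign σ : ℤ) * ∏ i, A (σ i) i) =
      ∑ j, (Equiv.Perm.sign σ : ℤ) * ((∏ i ∈ Finset.univ.erase j, A (σ i) i) * δ (A (σ j) j)) := by
    rw [δ.leibniz, δ.map_intCast, smul_zero, add_zero, smul_eq_mul, δ.map_finset_prod,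
      Finset.mul_sum]
  rw [trace_adjugate_mul, det_apply', map_sum, Finset.sum_congr rfl fun σ _ => hterm σ,
    Finset.sum_comm]
  refine Finset.sum_congr rfl fun j _ => ?_
  rw [det_apply']
  refine Finset.sum_congr rfl fun σ _ => ?_
  have hcol : ∀ i ∈ Finset.univ.erase j,
      (A.updateCol j fun i => A.map δ i j) (σ i) i = A (σ i) i :=
    fun i hi => by rw [updateCol_apply, if_neg (Finset.mem_erase.mp hi).1]
  rw [← Finset.mul_prod_erase _ _ (Finset.mem_univ j), Finset.prod_congr rfl hcol,
    updateCol_apply, if_pos rfl, map_apply]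
  ring

end Derivation

section

variable {R : Type*} [CommRing R] [Algebra ℚ R] {F : R⟦X⟧}

theorem expComp_eq_subst_exp (hF : constantCoeff F = 0) : expComp F = (exp R).subst F := by
  ext n
  have hsupp : (Function.support fun m => coeff m (exp R) • coeff n (F ^ m)) ⊆
      Finset.range (n + 1) := by
    intro m hm
    by_contra hmn
    have hlt : n < m := by simpa using hmn
    have hvanish : coeff n (F ^ m) = 0 :=
      X_pow_dvd_iff.mp (pow_dvd_pow_of_dvd (X_dvd_iff.mpr hF) m) n hlt
    exact hm (by simp [hvanish])
  rw [coeff_subst' (HasSubst.of_constantCoeff_zero' hF), finsum_eq_sum_of_support_subset _ hsupp,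
    expComp, coeff_mk]
  simp only [coeff_exp, smul_eq_mul]

theorem derivative_expComp (hF : constantCoeff F = 0) :
    d⁄dX R (expComp F) = expComp F * d⁄dX R F := by
  rw [expComp_eq_subst_exp hF, derivative_subst (HasSubst.of_constantCoeff_zero' hF),
    derivative_exp]

theorem constantCoeff_expComp (F : R⟦X⟧) : constantCoeff (expComp F) = 1 := by
  simp [expComp]

theorem derivative_eq_mk_of_coeff_succ {a : ℕ → R}
    (h : ∀ n : ℕ, coeff (n + 1) F = ((n + 1 : ℚ))⁻¹ • a n) : d⁄dX R F = mk a := by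
  ext n
  have hcast : ((n : R) + 1) = algebraMap ℚ R ((n : ℚ) + 1) := by
    rw [map_add, map_one, map_natCast]
  rw [coeff_derivative, coeff_mk, h, hcast, smul_mul_assoc, mul_comm, ← Algebra.smul_def,
    inv_smul_smul₀ (by positivity)]

end

namespace Matrix

variable {R : Type*} [CommRing R] {n : Type*} [Fintype n] [DecidableEq n] (M : Matrix n n R)

noncomputable def geomSeries : Matrix n n R⟦X⟧ :=
  of fun i j => mk fun k => (M ^ k) i j

theorem one_sub_X_smul_mul_geomSeries : (1 - (X : R⟦X⟧) • M.map C) * M.geomSeries = 1 := by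
  rw [sub_mul, one_mul, smul_mul]
  ext i j k
  rw [sub_apply, smul_apply, smul_eq_mul, map_sub]
  cases k with
  | zero => simp [geomSeries, one_apply, apply_ite (coeff 0)]
  | succ k =>
    simp only [geomSeries, coeff_succ_X_mul, mul_apply, of_apply, map_apply, map_sum, coeff_C_mul,
      coeff_mk]
    rw [pow_succ', mul_apply, sub_self]
    simp [one_apply, apply_ite (coeff (k + 1))]

theorem adjugate_one_sub_X_smul :
    (1 - (X : R⟦X⟧) • M.map C).adjugate = (1 - (X : R⟦X⟧) • M.map C).det • M.geomSeries := by
  set A := 1 - (X : R⟦X⟧) • M.map C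
  calc A.adjugate = A.adjugate * (A * M.geomSeries) := by
        rw [one_sub_X_smul_mul_geomSeries, mul_one]
    _ = A.det • M.geomSeries := by rw [← Matrix.mul_assoc, adjugate_mul, smul_mul, one_mul]

theorem trace_geomSeries_mul :
    trace (M.geomSeries * M.map C) = mk fun k => trace (M ^ (k + 1)) := by
  ext k
  simp [trace, geomSeries, mul_apply, coeff_mul_C, pow_succ]

theorem derivative_det_one_sub_X_smul :
    d⁄dX R (1 - (X : R⟦X⟧) • M.map C).det =
      -((1 - (X : R⟦X⟧) • M.map C).det * mk fun k => trace (M ^ (k + 1))) := by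
  have hderiv : (1 - (X : R⟦X⟧) • M.map C).map (d⁄dX R) = -M.map C := by
    ext i j
    simp [one_apply, apply_ite (d⁄dX R)]
  rw [Derivation.map_det, hderiv, mul_neg, trace_neg, adjugate_one_sub_X_smul, smul_mul,
    trace_smul, smul_eq_mul, trace_geomSeries_mul]

theorem constantCoeff_det_one_sub_X_smul :
    constantCoeff (1 - (X : R⟦X⟧) • M.map C).det = 1 := by
  have hconst : (1 - (X : R⟦X⟧) • M.map C).map constantCoeff = 1 := by
    ext i j
    simp [one_apply, apply_ite constantCoeff]
  rw [RingHom.map_det, RingHom.mapMatrix_apply, hconst, det_one]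

end Matrix

theorem PowerSeries.mul_eq_one_of_derivative_eq {R : Type*} [CommRing R] [IsAddTorsionFree R]
    {P E g : R⟦X⟧} (hP : d⁄dX R P = -(P * g)) (hE : d⁄dX R E = E * g)
    (hP0 : constantCoeff P = 1) (hE0 : constantCoeff E = 1) : P * E = 1 := by
  refine derivative.ext ?_ (by rw [map_mul, hP0, hE0, map_one, one_mul])
  rw [Derivation.leibniz, hP, hE, smul_eq_mul, smul_eq_mul, Derivation.map_one_eq_zero]
  ring

theorem stmt3 {R : Type*} [CommRing R] [Algebra ℚ R] (d : ℕ)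
    (M : Matrix (Fin d) (Fin d) R) :
    ((1 : Matrix (Fin d) (Fin d) (PowerSeries R)) -
        Matrix.of fun i j => PowerSeries.X * PowerSeries.C (M i j)).det *
      expComp (PowerSeries.mk fun n => match n with
        | 0 => 0
        | m + 1 => ((m + 1 : ℚ))⁻¹ • Matrix.trace (M ^ (m + 1))) = 1 := by
  have : IsAddTorsionFree R := .of_module_rat R
  have hA : (1 - of fun i j => X * C (M i j)) = 1 - (X : R⟦X⟧) • M.map C := by
    ext i j
    simp
  rw [hA]
  refine mul_eq_one_of_derivative_eq M.derivative_det_one_sub_X_smul ?_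
    M.constantCoeff_det_one_sub_X_smul (constantCoeff_expComp _)
  rw [derivative_expComp (by simp), derivative_eq_mk_of_coeff_succ fun n => by rw [coeff_mk]]
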